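/- Let F satisfy Assumption 2 and a > 0, and let b_F and g be the unique constant and the unique differentiable solution on ℝ of g'(x) = a·x² − b_F − F(g(x)) with x·g(x) ≤ 0 for all x ∈ ℝ. Then g is twice differentiable and satisfies the second-order ordinary differential equation g''(x) = 2a·x − F'(g(x))·g'(x) for all x ∈ ℝ; moreover, g is the unique twice differentiable function on ℝ satisfying this second-order equation together with x·g(x) ≤ 0 for all x ∈ ℝ. -/

import Mathlib

/-- Assumption 2 on the function `F`. -/
structure Assumption2 (F : ℝ → ℝ) : Prop where
  convex : ConvexOn ℝ Set.univ F
  diff : Differentiable ℝ F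
  even : ∀ x : ℝ, F (-x) = F x
  strictMonoOn : StrictMonoOn F (Set.Ici 0)
  map_zero : F 0 = 0
  deriv_diffOn : ∀ x ∈ Set.Ici (0 : ℝ), DifferentiableAt ℝ (deriv F) x
  deriv_strictMonoOn : StrictMonoOn (deriv F) (Set.Ici 0)
  deriv_zero : deriv F 0 = 0
  growth : ∃ K > (0 : ℝ), ∃ p : ℝ, 2 ≤ p ∧ ∀ x : ℝ, F x ≤ K * (1 + |x| ^ p)
  second_deriv_lb : ∃ C > (0 : ℝ), ∃ x₀ > (0 : ℝ), ∀ x : ℝ, x₀ < |x| → C < deriv (deriv F) x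

/-!
Differentiating the first-order equation gives the second-order one. Conversely, a solution `h`
of the second-order equation has the first integral `a x² - h' - F (h)`, so it solves the
first-order equation for some constant `c`, and everything reduces to uniqueness, constant
included, of solutions `k` of `k' = a x² - c - F (k)` with `x k(x) ≤ 0`. On `[0, ∞)` both
solutions are nonpositive, so by evenness and superadditivity of `F` on `[0, ∞)` the difference
`d = g - h` of solutions with constants `b ≤ c` satisfies `d' ≥ c - b + F (d)` wherever `d ≥ 0`.
As `F` grows quadratically, `d` cannot become positive without blowing up in finite time; hence
`g ≤ h` on `[0, ∞)`. If moreover `b < c`, then `d' ≥ c - b` from `d 0 = 0` would make `d` positive,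
so `b = c` and `g = h` on `[0, ∞)`. The reflection `k ↦ -k (-·)` handles `(-∞, 0]`.
-/

open Set

lemma add_mul_sub_le_of_lt_deriv {d d' : ℝ → ℝ} {s ε μ : ℝ}
    (hd : ∀ x, s ≤ x → HasDerivAt d (d' x) x) (hμ : 0 ≤ μ) (hs : ε ≤ d s)
    (hstep : ∀ x, s ≤ x → ε ≤ d x → μ < d' x) {x : ℝ} (hx : s ≤ x) :
    ε + μ * (x - s) ≤ d x := by
  have hline : ∀ y, HasDerivAt (fun y => ε + μ * (y - s)) μ y := fun y => by
    simpa using (((hasDerivAt_id y).sub_const s).const_mul μ).const_add ε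
  refine image_le_of_deriv_right_lt_deriv_boundary' (f' := fun _ => μ)
    (fun y _ => (hline y).continuousAt.continuousWithinAt)
    (fun y _ => (hline y).hasDerivWithinAt) (by simpa using hs)
    (fun y hy => (hd y hy.1).continuousAt.continuousWithinAt)
    (fun y hy => (hd y hy.1).hasDerivWithinAt) (fun y hy hdy => hstep y hy.1 ?_) ⟨hx, le_rfl⟩
  rw [← hdy]
  nlinarith [hy.1]

lemma false_of_mul_sq_le_deriv {d : ℝ → ℝ} (hd : Differentiable ℝ d) {κ s : ℝ} (hκ : 0 < κ)
    (hpos : ∀ x, s ≤ x → 0 < d x) (hderiv : ∀ x, s ≤ x → κ * d x ^ 2 ≤ deriv d x) : False := by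
  -- `-1 / d` increases at rate at least `κ`, yet stays negative.
  have hu : ∀ x, s ≤ x → HasDerivAt (fun y => -(d y)⁻¹) (deriv d x / d x ^ 2) x := fun x hx => by
    simpa only [neg_div, neg_neg] using ((hd x).hasDerivAt.fun_inv (hpos x hx).ne').fun_neg
  have hs := hpos s le_rfl
  have hT : s ≤ s + 2 * (d s)⁻¹ / κ := le_add_of_nonneg_right (by positivity)
  have hgrowth := add_mul_sub_le_of_lt_deriv hu (μ := κ / 2) (by positivity) le_rfl
    (fun x hx _ => by
      have hsq : 0 < d x ^ 2 := by have := hpos x hx; positivity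
      rw [lt_div_iff₀ hsq]
      nlinarith [hderiv x hx]) hT
  have hrate : κ / 2 * (s + 2 * (d s)⁻¹ / κ - s) = (d s)⁻¹ := by field_simp; ring
  linarith [inv_pos.2 (hpos _ hT)]

lemma false_of_map_le_deriv {φ d : ℝ → ℝ} (hφ : MonotoneOn φ (Ici 0))
    (hφpos : ∀ y, 0 < y → 0 < φ y) {κ Y : ℝ} (hκ : 0 < κ) (hφY : ∀ y, Y ≤ y → κ * y ^ 2 ≤ φ y)
    (hd : Differentiable ℝ d) {s : ℝ} (hds : 0 < d s)
    (hderiv : ∀ x, s ≤ x → 0 < d x → φ (d x) ≤ deriv d x) : False := by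
  have hδ : 0 < φ (d s) := hφpos _ hds
  have hgrowth : ∀ x, s ≤ x → d s + φ (d s) / 2 * (x - s) ≤ d x := fun x hx =>
    add_mul_sub_le_of_lt_deriv (fun y _ => (hd y).hasDerivAt) (by positivity) le_rfl
      (fun y hy hdy => by
        have := hφ hds.le (hds.le.trans hdy) hdy
        linarith [hderiv y hy (hds.trans_le hdy)]) hx
  have hlarge : ∀ x, s + 2 * |Y| / φ (d s) ≤ x → |Y| < d x := fun x hx => by
    have h1 := hgrowth x ((le_add_of_nonneg_right (by positivity)).trans hx)
    have h2 : 2 * |Y| / φ (d s) * (φ (d s) / 2) = |Y| := by field_simp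
    nlinarith
  refine false_of_mul_sq_le_deriv hd hκ (fun x hx => (abs_nonneg Y).trans_lt (hlarge x hx))
    (fun x hx => ?_)
  have hY := hlarge x hx
  exact (hφY _ ((le_abs_self Y).trans hY.le)).trans
    (hderiv x (le_trans (le_add_of_nonneg_right (by positivity)) hx) ((abs_nonneg Y).trans_lt hY))

lemma ConvexOn.add_le_map_add {f : ℝ → ℝ} (hf : ConvexOn ℝ (Ici 0) f) (h0 : f 0 ≤ 0)
    {p t : ℝ} (hp : 0 ≤ p) (ht : 0 ≤ t) : f p + f t ≤ f (p + t) := by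
  rcases (add_nonneg hp ht).eq_or_lt with hpt | hpt
  · obtain ⟨rfl, rfl⟩ : p = 0 ∧ t = 0 := ⟨by linarith, by linarith⟩
    simpa using h0
  -- `f` lies below its chord from `0` to `p + t`
  have hchord : ∀ q, 0 ≤ q → q ≤ p + t → f q ≤ q / (p + t) * f (p + t) := fun q hq hqs => by
    have := hf.2 (mem_Ici.2 le_rfl) (mem_Ici.2 hpt.le) (sub_nonneg.2 ((div_le_one hpt).2 hqs))
      (div_nonneg hq hpt.le) (sub_add_cancel 1 _)
    simp only [smul_eq_mul, mul_zero, zero_add, div_mul_cancel₀ q hpt.ne'] at this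
    nlinarith [(div_le_one hpt).2 hqs]
  calc f p + f t ≤ p / (p + t) * f (p + t) + t / (p + t) * f (p + t) :=
        add_le_add (hchord p hp (by linarith)) (hchord t ht (by linarith))
    _ = f (p + t) := by rw [← add_mul, ← add_div, div_self hpt.ne', one_mul]

namespace Assumption2

variable {F : ℝ → ℝ}

lemma monotoneOn (hF : Assumption2 F) : MonotoneOn F (Ici 0) := hF.strictMonoOn.monotoneOn

lemma pos (hF : Assumption2 F) {y : ℝ} (hy : 0 < y) : 0 < F y :=
  hF.map_zero ▸ hF.strictMonoOn (mem_Ici.2 le_rfl) (mem_Ici.2 hy.le) hy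

lemma add_le_map_add (hF : Assumption2 F) {p t : ℝ} (hp : 0 ≤ p) (ht : 0 ≤ t) :
    F p + F t ≤ F (p + t) :=
  (hF.convex.subset (subset_univ _) (convex_Ici 0)).add_le_map_add hF.map_zero.le hp ht

lemma exists_mul_sub_le_deriv (hF : Assumption2 F) :
    ∃ C > 0, ∃ x₀ > 0, ∀ z, x₀ ≤ z → C * (z - x₀) ≤ deriv F z := by
  obtain ⟨C, hC, x₀, hx₀, hF''⟩ := hF.second_deriv_lb
  refine ⟨C, hC, x₀, hx₀, fun z hz => ?_⟩
  have hdiff : ∀ y, x₀ ≤ y → DifferentiableAt ℝ (deriv F) y := fun y hy =>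
    hF.deriv_diffOn y (mem_Ici.2 (hx₀.le.trans hy))
  have hmvt := (convex_Ici x₀).mul_sub_le_image_sub_of_le_deriv
    (fun y hy => (hdiff y hy).continuousAt.continuousWithinAt)
    (fun y hy => (hdiff y (interior_subset hy)).differentiableWithinAt)
    (fun y hy => by
      rw [interior_Ici] at hy
      exact (hF'' y (by rw [abs_of_pos (hx₀.trans hy)]; exact hy)).le)
    x₀ (mem_Ici.2 le_rfl) z (mem_Ici.2 hz) hz
  have hx₀' : 0 ≤ deriv F x₀ :=
    hF.deriv_zero ▸ hF.deriv_strictMonoOn.monotoneOn (mem_Ici.2 le_rfl) (mem_Ici.2 hx₀.le) hx₀.le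
  linarith

lemma exists_mul_sq_le (hF : Assumption2 F) : ∃ κ > 0, ∃ Y, ∀ y, Y ≤ y → κ * y ^ 2 ≤ F y := by
  obtain ⟨C, hC, x₀, hx₀, hF'⟩ := hF.exists_mul_sub_le_deriv
  refine ⟨C / 8, by positivity, 4 * x₀, fun y hy => ?_⟩
  have hy2 : 0 < y / 2 := by linarith
  have htangent := hF.convex.deriv_le_slope (mem_univ _) (mem_univ _) (half_lt_self (by linarith))
    (hF.diff (y / 2))
  rw [slope_def_field, le_div_iff₀ (by linarith)] at htangent
  have h1 : C * (y / 4) ≤ deriv F (y / 2) :=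
    (mul_le_mul_of_nonneg_left (by linarith) hC.le).trans (hF' (y / 2) (by linarith))
  nlinarith [mul_le_mul_of_nonneg_right h1 hy2.le, hF.pos hy2]

end Assumption2

structure IsAdmissibleSolution (F : ℝ → ℝ) (a b : ℝ) (k : ℝ → ℝ) : Prop where
  differentiable : Differentiable ℝ k
  deriv_eq : ∀ x, deriv k x = a * x ^ 2 - b - F (k x)
  mul_nonpos : ∀ x, x * k x ≤ 0

namespace IsAdmissibleSolution

variable {F : ℝ → ℝ} {a b c : ℝ} {g h : ℝ → ℝ}

lemma map_zero (hg : IsAdmissibleSolution F a b g) : g 0 = 0 := by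
  -- `x ↦ x * g x` has a maximum at `0`, where its derivative is `g 0`
  have hmax : IsLocalMax (fun x => x * g x) 0 :=
    Filter.Eventually.of_forall fun x => by simpa using hg.mul_nonpos x
  have hderiv : HasDerivAt (fun x => x * g x) (1 * g 0 + 0 * deriv g 0) 0 :=
    (hasDerivAt_id 0).mul (hg.differentiable 0).hasDerivAt
  simpa [hderiv.deriv] using hmax.deriv_eq_zero

lemma nonpos_of_nonneg (hg : IsAdmissibleSolution F a b g) {x : ℝ} (hx : 0 ≤ x) : g x ≤ 0 := by
  rcases hx.eq_or_lt with rfl | hx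
  · exact hg.map_zero.le
  · exact nonpos_of_mul_nonpos_right (hg.mul_nonpos x) hx

lemma comp_neg (hF : Assumption2 F) (hg : IsAdmissibleSolution F a b g) :
    IsAdmissibleSolution F a b (fun x => -g (-x)) := by
  have hderiv : ∀ x, HasDerivAt (fun x => -g (-x)) (deriv g (-x)) x := fun x => by
    simpa using ((hg.differentiable (-x)).hasDerivAt.comp x (hasDerivAt_neg x)).fun_neg
  refine ⟨fun x => (hderiv x).differentiableAt, fun x => ?_, fun x => ?_⟩
  · rw [(hderiv x).deriv, hg.deriv_eq, hF.even]
    ring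
  · nlinarith [hg.mul_nonpos (-x)]

lemma sub_add_map_le_deriv_sub (hF : Assumption2 F) (hg : IsAdmissibleSolution F a b g)
    (hh : IsAdmissibleSolution F a c h) {x : ℝ} (hx : 0 ≤ x) (hhg : h x ≤ g x) :
    c - b + F (g x - h x) ≤ deriv (fun y => g y - h y) x := by
  have hsuper := hF.add_le_map_add (neg_nonneg.2 (hg.nonpos_of_nonneg hx)) (sub_nonneg.2 hhg)
  rw [deriv_fun_sub (hg.differentiable x) (hh.differentiable x), hg.deriv_eq, hh.deriv_eq,
    ← hF.even (g x), ← hF.even (h x)]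
  rw [show -g x + (g x - h x) = -h x by ring] at hsuper
  linarith

lemma le_of_const_le (hF : Assumption2 F) (hg : IsAdmissibleSolution F a b g)
    (hh : IsAdmissibleSolution F a c h) (hbc : b ≤ c) {x : ℝ} (hx : 0 ≤ x) : g x ≤ h x := by
  -- otherwise `g - h` satisfies `(g - h)' ≥ F (g - h)` beyond `x` and blows up
  by_contra! hhg
  obtain ⟨κ, hκ, Y, hY⟩ := hF.exists_mul_sq_le
  refine false_of_map_le_deriv hF.monotoneOn (fun _ => hF.pos) hκ hY
    (hg.differentiable.fun_sub hh.differentiable) (sub_pos.2 hhg) fun y hy hd => ?_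
  linarith [hg.sub_add_map_le_deriv_sub hF hh (hx.trans hy) (sub_pos.1 hd).le]

lemma const_le (hF : Assumption2 F) (hg : IsAdmissibleSolution F a b g)
    (hh : IsAdmissibleSolution F a c h) : c ≤ b := by
  by_contra! hbc
  -- `g - h` starts at `0` and grows at rate at least `c - b` while nonnegative
  have hgrowth := add_mul_sub_le_of_lt_deriv (d := fun y => g y - h y) (s := 0) (ε := 0)
    (fun y _ => ((hg.differentiable y).fun_sub (hh.differentiable y)).hasDerivAt)
    (μ := (c - b) / 2) (by linarith) (by simp [hg.map_zero, hh.map_zero])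
    (fun y hy hd => by
      linarith [hg.sub_add_map_le_deriv_sub hF hh hy (sub_nonneg.1 hd),
        hF.monotoneOn (mem_Ici.2 le_rfl) (mem_Ici.2 hd) hd, hF.map_zero]) zero_le_one
  linarith [hg.le_of_const_le hF hh hbc.le zero_le_one]

lemma eq_of_nonneg (hF : Assumption2 F) (hg : IsAdmissibleSolution F a b g)
    (hh : IsAdmissibleSolution F a c h) {x : ℝ} (hx : 0 ≤ x) : g x = h x :=
  (hg.le_of_const_le hF hh (hh.const_le hF hg) hx).antisymm
    (hh.le_of_const_le hF hg (hg.const_le hF hh) hx)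

lemma unique (hF : Assumption2 F) (hg : IsAdmissibleSolution F a b g)
    (hh : IsAdmissibleSolution F a c h) : g = h := by
  funext x
  rcases le_total 0 x with hx | hx
  · exact hg.eq_of_nonneg hF hh hx
  · simpa using (hg.comp_neg hF).eq_of_nonneg hF (hh.comp_neg hF) (neg_nonneg.2 hx)

end IsAdmissibleSolution

lemma hasDerivAt_mul_sq_sub_comp {F k : ℝ → ℝ} (hF : Differentiable ℝ F) (hk : Differentiable ℝ k)
    (a b x : ℝ) :
    HasDerivAt (fun y => a * y ^ 2 - b - F (k y)) (2 * a * x - deriv F (k x) * deriv k x) x := by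
  refine ((((hasDerivAt_pow 2 x).const_mul a).sub_const b).fun_sub
    ((hF (k x)).hasDerivAt.comp x (hk x).hasDerivAt)).congr_deriv ?_
  ring

lemma exists_deriv_eq_of_deriv_deriv_eq {F h : ℝ → ℝ} (hF : Differentiable ℝ F) {a : ℝ}
    (hh : Differentiable ℝ h) (hh' : Differentiable ℝ (deriv h))
    (hh'' : ∀ x, deriv (deriv h) x = 2 * a * x - deriv F (h x) * deriv h x) :
    ∃ c, ∀ x, deriv h x = a * x ^ 2 - c - F (h x) := by
  -- `a x² - h' - F ∘ h` is a first integral of the second-order equation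
  have hconst : ∀ x, HasDerivAt (fun y => a * y ^ 2 - deriv h y - F (h y)) 0 x := fun x => by
    refine ((((hasDerivAt_pow 2 x).const_mul a).fun_sub (hh' x).hasDerivAt).fun_sub
      ((hF (h x)).hasDerivAt.comp x (hh x).hasDerivAt)).congr_deriv ?_
    rw [hh'']
    ring
  refine ⟨a * 0 ^ 2 - deriv h 0 - F (h 0), fun x => ?_⟩
  have := is_const_of_deriv_eq_zero (fun y => (hconst y).differentiableAt)
    (fun y => (hconst y).deriv) x 0
  linarith

theorem stmt14_general (F : ℝ → ℝ) (hF : Assumption2 F) (a bF : ℝ) (g : ℝ → ℝ)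
    (hg : Differentiable ℝ g)
    (hode : ∀ x : ℝ, deriv g x = a * x ^ 2 - bF - F (g x))
    (hsign : ∀ x : ℝ, x * g x ≤ 0) :
    Differentiable ℝ (deriv g) ∧
    (∀ x : ℝ, deriv (deriv g) x = 2 * a * x - deriv F (g x) * deriv g x) ∧
    ∀ h : ℝ → ℝ, Differentiable ℝ h → Differentiable ℝ (deriv h) →
      (∀ x : ℝ, deriv (deriv h) x = 2 * a * x - deriv F (h x) * deriv h x) →
      (∀ x : ℝ, x * h x ≤ 0) → h = g := by
  have hg' : deriv g = fun x => a * x ^ 2 - bF - F (g x) := funext hode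
  refine ⟨fun x => ?_, fun x => ?_, fun h hh hh' hh'' hhsign => ?_⟩
  · exact hg' ▸ (hasDerivAt_mul_sq_sub_comp hF.diff hg a bF x).differentiableAt
  · exact hg' ▸ (hasDerivAt_mul_sq_sub_comp hF.diff hg a bF x).deriv
  · obtain ⟨c, hc⟩ := exists_deriv_eq_of_deriv_deriv_eq hF.diff hh hh' hh''
    exact IsAdmissibleSolution.unique hF ⟨hh, hc, hhsign⟩ ⟨hg, hode, hsign⟩

/-- Lemma A.6: the unique solution of the first-order ODE `g' = a·x² − b_F − F(g)` with
`x·g(x) ≤ 0` is twice differentiable and solves the second-order ODE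
`g'' = 2a·x − F'(g)·g'`; moreover it is the unique twice differentiable solution of this
second-order ODE on `ℝ` with `x·g(x) ≤ 0`. -/
theorem stmt14 (F : ℝ → ℝ) (hF : Assumption2 F) (a bF : ℝ) (ha : 0 < a) (g : ℝ → ℝ)
    (hg : Differentiable ℝ g)
    (hode : ∀ x : ℝ, deriv g x = a * x ^ 2 - bF - F (g x))
    (hsign : ∀ x : ℝ, x * g x ≤ 0) :
    Differentiable ℝ (deriv g) ∧
    (∀ x : ℝ, deriv (deriv g) x = 2 * a * x - deriv F (g x) * deriv g x) ∧
    ∀ h : ℝ → ℝ, Differentiable ℝ h → Differentiable ℝ (deriv h) →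
      (∀ x : ℝ, deriv (deriv h) x = 2 * a * x - deriv F (h x) * deriv h x) →
      (∀ x : ℝ, x * h x ≤ 0) → h = g :=
  stmt14_general F hF a bF g hg hode hsign
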